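/- Let F be a field containing ℂ and let v : F∖{0} → ℤ^d be a valuation with one-dimensional leaves, where ℤ^d is ordered lexicographically. Assume there exist u₁, …, u_d ∈ F∖{0} with v(u_i) equal to the i-th standard basis vector of ℤ^d for each i. Let A = ⊕_{k≥0} A_k be a graded ℂ-subalgebra of the polynomial ring F[t] (each A_k a ℂ-subspace of F, identified with coefficients of t^k) and let ṽ : A∖{0} → ℤ × ℤ^d be the extended valuation ṽ(∑ f_i t^i) = (s, v(f_s)) (f_s the top nonzero coefficient), with ℤ × ℤ^d ordered by (k,x) > (ℓ,y) iff k < ℓ, or k = ℓ and x > y. Let S = S(A, ṽ) be the value semigroup, and assume S is finitely generated. For γ ∈ ℤ × ℤ^d put F_γ = {f ∈ A : f = 0 or ṽ(f) ≥ γ} and F_{>γ} = {f ∈ A : f = 0 or ṽ(f) > γ}. Then the associated graded algebra gr A = ⊕_{γ∈S} F_γ/F_{>γ} is isomorphic as a ℂ-algebra to the monoid algebra ℂ[S] of the commutative monoid S. -/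

import Mathlib

set_option synthInstance.maxHeartbeats 800000
set_option maxHeartbeats 1600000

noncomputable section

/-- The order on `ℤ × Γ`: `extLe a b` means `a ≤ b`, where `(k,x) ≥ (ℓ,y)` iff `k < ℓ`,
or `k = ℓ` and `x ≥ y`. -/
def extLe {Γ : Type*} [LinearOrder Γ] (a b : ℤ × Γ) : Prop :=
  b.1 < a.1 ∨ (a.1 = b.1 ∧ a.2 ≤ b.2)

/-- The corresponding strict order on `ℤ × Γ`. -/
def extLt {Γ : Type*} [LinearOrder Γ] (a b : ℤ × Γ) : Prop :=
  b.1 < a.1 ∨ (a.1 = b.1 ∧ a.2 < b.2)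

theorem extLe_trans {Γ : Type*} [LinearOrder Γ] {a b c : ℤ × Γ}
    (h1 : extLe a b) (h2 : extLe b c) : extLe a c := by
  rcases h1 with h1 | ⟨h1, h1'⟩ <;> rcases h2 with h2 | ⟨h2, h2'⟩
  · exact Or.inl (h2.trans h1)
  · exact Or.inl (h2 ▸ h1)
  · exact Or.inl (h1 ▸ h2)
  · exact Or.inr ⟨h1.trans h2, h1'.trans h2'⟩

theorem extLt_of_extLt_of_extLe {Γ : Type*} [LinearOrder Γ] {a b c : ℤ × Γ}
    (h1 : extLt a b) (h2 : extLe b c) : extLt a c := by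
  rcases h1 with h1 | ⟨h1, h1'⟩ <;> rcases h2 with h2 | ⟨h2, h2'⟩
  · exact Or.inl (h2.trans h1)
  · exact Or.inl (h2 ▸ h1)
  · exact Or.inl (h1 ▸ h2)
  · exact Or.inr ⟨h1.trans h2, h1'.trans_le h2'⟩

/-- Shortcut instance: `Fin d` is well-founded under `<`. -/
instance (priority := 10000) instWellFoundedLTFin {d : ℕ} : WellFoundedLT (Fin d) :=
  Finite.to_wellFoundedLT

/-- Shortcut instance: the lexicographic linear order on `ℤ^d`. -/
noncomputable instance (priority := 10000) instLinearOrderLexPi {d : ℕ} :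
    LinearOrder (Lex (Fin d → ℤ)) := inferInstance

variable {F : Type*} [Field F] [Algebra ℂ F] {Γ : Type*} [LinearOrder Γ]

/-- Shortcut instance to speed up instance resolution. -/
instance (priority := 10000) instAddCommGroupCoeSubalgebra (A : Subalgebra ℂ (Polynomial F)) :
    AddCommGroup ↥A := inferInstance

/-- Shortcut instance to speed up instance resolution. -/
instance (priority := 10000) instModuleCoeSubalgebra (A : Subalgebra ℂ (Polynomial F)) :
    Module ℂ ↥A := inferInstance

variable (A : Subalgebra ℂ (Polynomial F)) (vt : Polynomial F → ℤ × Γ)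
  (hvt_min : ∀ p q : Polynomial F, p ≠ 0 → q ≠ 0 → p + q ≠ 0 →
    extLe (vt p) (vt (p + q)) ∨ extLe (vt q) (vt (p + q)))
  (hvt_smul : ∀ (c : ℂ) (p : Polynomial F), c ≠ 0 → p ≠ 0 → vt (c • p) = vt p)

/-- The subspace `F_γ = {f ∈ A : f = 0 or ṽ f ≥ γ}` of a subalgebra `A ⊆ F[t]` determined by
a (pre-)valuation `ṽ = vt`. -/
def filtAt (γ : ℤ × Γ) : Submodule ℂ ↥A where
  carrier := {f : ↥A | (f : Polynomial F) = 0 ∨ extLe γ (vt ↑f)}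
  add_mem' := by
    rintro f g hf hg
    show ((f + g : ↥A) : Polynomial F) = 0 ∨ extLe γ (vt ((f + g : ↥A) : Polynomial F))
    have hf' : ((f : Polynomial F) = 0) ∨ extLe γ (vt ↑f) := hf
    have hg' : ((g : Polynomial F) = 0) ∨ extLe γ (vt ↑g) := hg
    have hco : ((f + g : ↥A) : Polynomial F) = (f : Polynomial F) + (g : Polynomial F) := rfl
    by_cases hf0 : (f : Polynomial F) = 0
    · rw [hco, hf0, zero_add]; exact hg'
    by_cases hg0 : (g : Polynomial F) = 0
    · rw [hco, hg0, add_zero]; exact hf'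
    by_cases hfg0 : (f : Polynomial F) + (g : Polynomial F) = 0
    · exact Or.inl (hco.trans hfg0)
    · rw [hco]
      rcases hvt_min (f : Polynomial F) (g : Polynomial F) hf0 hg0 hfg0 with h | h
      · exact Or.inr (extLe_trans (hf'.resolve_left hf0) h)
      · exact Or.inr (extLe_trans (hg'.resolve_left hg0) h)
  zero_mem' := Or.inl (by simp)
  smul_mem' := by
    intro c f hf
    show ((c • f : ↥A) : Polynomial F) = 0 ∨ extLe γ (vt ((c • f : ↥A) : Polynomial F))
    have hf' : ((f : Polynomial F) = 0) ∨ extLe γ (vt ↑f) := hf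
    have hco : ((c • f : ↥A) : Polynomial F) = c • (f : Polynomial F) := rfl
    by_cases hc : c = 0
    · exact Or.inl (by rw [hco, hc, zero_smul])
    by_cases hf0 : (f : Polynomial F) = 0
    · exact Or.inl (by rw [hco, hf0, smul_zero])
    · rw [hco, hvt_smul c _ hc hf0]
      exact Or.inr (hf'.resolve_left hf0)

/-- The subspace `F_{>γ} = {f ∈ A : f = 0 or ṽ f > γ}`. -/
def filtGt (γ : ℤ × Γ) : Submodule ℂ ↥A where
  carrier := {f : ↥A | (f : Polynomial F) = 0 ∨ extLt γ (vt ↑f)}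
  add_mem' := by
    rintro f g hf hg
    show ((f + g : ↥A) : Polynomial F) = 0 ∨ extLt γ (vt ((f + g : ↥A) : Polynomial F))
    have hf' : ((f : Polynomial F) = 0) ∨ extLt γ (vt ↑f) := hf
    have hg' : ((g : Polynomial F) = 0) ∨ extLt γ (vt ↑g) := hg
    have hco : ((f + g : ↥A) : Polynomial F) = (f : Polynomial F) + (g : Polynomial F) := rfl
    by_cases hf0 : (f : Polynomial F) = 0
    · rw [hco, hf0, zero_add]; exact hg'
    by_cases hg0 : (g : Polynomial F) = 0
    · rw [hco, hg0, add_zero]; exact hf'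
    by_cases hfg0 : (f : Polynomial F) + (g : Polynomial F) = 0
    · exact Or.inl (hco.trans hfg0)
    · rw [hco]
      rcases hvt_min (f : Polynomial F) (g : Polynomial F) hf0 hg0 hfg0 with h | h
      · exact Or.inr (extLt_of_extLt_of_extLe (hf'.resolve_left hf0) h)
      · exact Or.inr (extLt_of_extLt_of_extLe (hg'.resolve_left hg0) h)
  zero_mem' := Or.inl (by simp)
  smul_mem' := by
    intro c f hf
    show ((c • f : ↥A) : Polynomial F) = 0 ∨ extLt γ (vt ((c • f : ↥A) : Polynomial F))
    have hf' : ((f : Polynomial F) = 0) ∨ extLt γ (vt ↑f) := hf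
    have hco : ((c • f : ↥A) : Polynomial F) = c • (f : Polynomial F) := rfl
    by_cases hc : c = 0
    · exact Or.inl (by rw [hco, hc, zero_smul])
    by_cases hf0 : (f : Polynomial F) = 0
    · exact Or.inl (by rw [hco, hf0, smul_zero])
    · rw [hco, hvt_smul c _ hc hf0]
      exact Or.inr (hf'.resolve_left hf0)

/-- The leaf `F_γ / F_{>γ}` of the filtration. -/
abbrev grQuot (γ : ℤ × Γ) :=
  ↥(filtAt A vt hvt_min hvt_smul γ) ⧸
    Submodule.comap (filtAt A vt hvt_min hvt_smul γ).subtype (filtGt A vt hvt_min hvt_smul γ)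

/-!
Every leaf `F_γ / F_{>γ}` with `γ ∈ S` is a line, so `gr A` has a basis indexed by `S` as soon as
one picks `Q_s ∈ A` with `ṽ(Q_s) = s`, and it is `ℂ[S]` if the `Q_s` can be chosen multiplicative
modulo higher terms: `ṽ(Q_s Q_t - Q_{s+t}) > s + t`.

For that choice, note that the fractions `a / b` (`a, b ∈ A ∖ 0`) paired with their values
`ṽ a - ṽ b` form a group which maps onto the group `N` generated by `S`. As `S` is finitely
generated and `ℤ × ℤ^d` is torsion free, `N` is free, so this map has a section
`s ↦ (a_s / b_s, s)`. Picking `Q_s` in the leaf of `s` so that `a_s - Q_s b_s` has value above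
`ṽ a_s`, the relation `a_s a_t b_{s+t} = a_{s+t} b_s b_t` forces
`(Q_s Q_t - Q_{s+t}) b_s b_t b_{s+t}` above `s + t + ṽ(b_s b_t b_{s+t})`.
-/

theorem extLe_refl (a : ℤ × Γ) : extLe a a := Or.inr ⟨rfl, le_rfl⟩

theorem extLt_irrefl (a : ℤ × Γ) : ¬extLt a a := by
  rintro (h | ⟨-, h⟩) <;> exact lt_irrefl _ h

theorem extLe_of_extLt {a b : ℤ × Γ} (h : extLt a b) : extLe a b :=
  h.imp_right fun h ↦ ⟨h.1, h.2.le⟩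

theorem extLt_of_extLe_of_ne {a b : ℤ × Γ} (h : extLe a b) (hne : a ≠ b) : extLt a b :=
  h.imp_right fun h ↦ ⟨h.1, h.2.lt_of_ne fun h₂ ↦ hne (Prod.ext h.1 h₂)⟩

theorem extLt_add_extLe [AddCommGroup Γ] [IsOrderedAddMonoid Γ] {a b c e : ℤ × Γ}
    (h₁ : extLt a b) (h₂ : extLe c e) : extLt (a + c) (b + e) := by
  rcases h₁ with h₁ | ⟨h₁, h₁'⟩ <;> rcases h₂ with h₂ | ⟨h₂, h₂'⟩
  · exact Or.inl (add_lt_add h₁ h₂)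
  · exact Or.inl (add_lt_add_of_lt_of_le h₁ h₂.ge)
  · exact Or.inl (add_lt_add_of_le_of_lt h₁.ge h₂)
  · exact Or.inr ⟨congrArg₂ (· + ·) h₁ h₂, add_lt_add_of_lt_of_le h₁' h₂'⟩

theorem extLt_of_extLt_add_right [AddCommGroup Γ] [IsOrderedAddMonoid Γ] {a b c : ℤ × Γ}
    (h : extLt (a + c) (b + c)) : extLt a b :=
  h.imp lt_of_add_lt_add_right fun h ↦ ⟨add_right_cancel h.1, lt_of_add_lt_add_right h.2⟩

theorem AddSubmonoid.FG.span_int_fg {M : Type*} [AddCommGroup M] {S : AddSubmonoid M}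
    (h : S.FG) : (Submodule.span ℤ (S : Set M)).FG := by
  obtain ⟨t, rfl⟩ := h
  refine ⟨t, le_antisymm (Submodule.span_mono AddSubmonoid.subset_closure) ?_⟩
  rw [Submodule.span_le]
  exact (AddSubmonoid.closure_le (S := (Submodule.span ℤ (t : Set M)).toAddSubmonoid)).2
    Submodule.subset_span

namespace Module.Basis

variable {k M G : Type*} [CommSemiring k] [AddMonoid M] [Semiring G] [Algebra k G]

theorem map_zero_eq_one_of_map_add (b : Basis M k G) (hb : ∀ s t, b (s + t) = b s * b t) :
    b 0 = 1 := by
  have hmul : LinearMap.mulLeft k (b 0) = LinearMap.id :=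
    b.ext fun t ↦ by simp [← hb]
  simpa using congr($hmul 1)

def addMonoidAlgebraAlgEquiv (b : Basis M k G) (hb : ∀ s t, b (s + t) = b s * b t) :
    AddMonoidAlgebra k M ≃ₐ[k] G :=
  let φ : AddMonoidAlgebra k M →ₐ[k] G := AddMonoidAlgebra.lift k G M
    { toFun s := b s.toAdd
      map_one' := b.map_zero_eq_one_of_map_add hb
      map_mul' s t := hb _ _ }
  have hφ : φ.toLinearMap = ((AddMonoidAlgebra.basis M k).equiv b (Equiv.refl M)).toLinearMap :=
    (AddMonoidAlgebra.basis M k).ext fun s ↦ by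
      rw [AlgHom.toLinearMap_apply, LinearEquiv.coe_coe, Basis.equiv_apply,
        AddMonoidAlgebra.basis_apply, AddMonoidAlgebra.lift_single, one_smul]
      rfl
  AlgEquiv.ofBijective φ <| by
    rw [← AlgHom.coe_toLinearMap, hφ]
    exact LinearEquiv.bijective _

end Module.Basis

namespace DirectSum

variable {k ι : Type*} [Semiring k] [DecidableEq ι] {M : ι → Type*} [∀ i, AddCommMonoid (M i)]
    [∀ i, Module k (M i)] (m : ∀ i, M i)
    (hm : ∀ i, Function.Bijective (LinearMap.toSpanSingleton k (M i) (m i)))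

def basisOfBijective : Module.Basis ι k (⨁ i, M i) :=
  .ofRepr ((DFinsupp.mapRange.linearEquiv fun i ↦ LinearEquiv.ofBijective _ (hm i)).symm.trans
    (finsuppLEquivDirectSum k k ι).symm)

theorem basisOfBijective_apply (i : ι) : basisOfBijective m hm i = of M i (m i) := by
  rw [basisOfBijective, Module.Basis.coe_ofRepr]
  simp only [LinearEquiv.trans_symm, LinearEquiv.symm_symm, LinearEquiv.trans_apply]
  rw [finsuppLEquivDirectSum_single]
  exact (DFinsupp.mapRange_single (hf := fun i ↦ map_zero _)).trans
    (congrArg (of M i) (LinearMap.toSpanSingleton_apply_one k (M i) (m i)))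

end DirectSum

section Valuation

variable {R : Type*} [CommRing R] [Algebra ℂ R]

/-- `x ∈ F_{>γ}`, for `x` in the whole ring. -/
def ValGt (w : R → ℤ × Γ) (γ : ℤ × Γ) (x : R) : Prop :=
  x = 0 ∨ extLt γ (w x)

def HasOneDimLeaves (w : R → ℤ × Γ) : Prop :=
  ∀ p q : R, p ≠ 0 → q ≠ 0 → w p = w q → ∃ c : ℂ, c ≠ 0 ∧ ValGt w (w q) (q - c • p)

variable [AddCommGroup Γ]

structure IsExtValuation (w : R → ℤ × Γ) : Prop where
  min_le : ∀ p q : R, p ≠ 0 → q ≠ 0 → p + q ≠ 0 →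
    extLe (w p) (w (p + q)) ∨ extLe (w q) (w (p + q))
  smul : ∀ (c : ℂ) (p : R), c ≠ 0 → p ≠ 0 → w (c • p) = w p
  mul : ∀ p q : R, p ≠ 0 → q ≠ 0 → w (p * q) = w p + w q

variable {w : R → ℤ × Γ} {γ δ : ℤ × Γ} {x y : R}

theorem ValGt.add (hw : IsExtValuation w) (hx : ValGt w γ x) (hy : ValGt w γ y) :
    ValGt w γ (x + y) := by
  by_cases hx0 : x = 0
  · simpa [hx0] using hy
  by_cases hy0 : y = 0
  · simpa [hy0] using hx
  by_cases hxy : x + y = 0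
  · exact Or.inl hxy
  refine Or.inr ((hw.min_le x y hx0 hy0 hxy).elim ?_ ?_) <;> intro h
  · exact extLt_of_extLt_of_extLe (hx.resolve_left hx0) h
  · exact extLt_of_extLt_of_extLe (hy.resolve_left hy0) h

theorem ValGt.neg (hw : IsExtValuation w) (hx : ValGt w γ x) : ValGt w γ (-x) := by
  by_cases hx0 : x = 0
  · exact Or.inl (by rw [hx0, neg_zero])
  rw [← neg_one_smul ℂ x]
  exact Or.inr (hw.smul (-1) x (by norm_num) hx0 ▸ hx.resolve_left hx0)

theorem ValGt.sub (hw : IsExtValuation w) (hx : ValGt w γ x) (hy : ValGt w γ y) :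
    ValGt w γ (x - y) :=
  sub_eq_add_neg x y ▸ hx.add hw (hy.neg hw)

section Ordered

variable [IsOrderedAddMonoid Γ]

theorem ValGt.mul (hw : IsExtValuation w) (hx : ValGt w γ x) (hy : ValGt w δ y) :
    ValGt w (γ + δ) (x * y) := by
  by_cases hx0 : x = 0
  · exact Or.inl (by rw [hx0, zero_mul])
  by_cases hy0 : y = 0
  · exact Or.inl (by rw [hy0, mul_zero])
  rw [ValGt, hw.mul x y hx0 hy0]
  exact Or.inr (extLt_add_extLe (hx.resolve_left hx0) (extLe_of_extLt (hy.resolve_left hy0)))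

theorem ValGt.mul_left (hw : IsExtValuation w) (hx : x ≠ 0) (hy : ValGt w γ y) :
    ValGt w (w x + γ) (x * y) := by
  by_cases hy0 : y = 0
  · exact Or.inl (by rw [hy0, mul_zero])
  rw [ValGt, hw.mul x y hx hy0, add_comm (w x), add_comm (w x)]
  exact Or.inr (extLt_add_extLe (hy.resolve_left hy0) (extLe_refl _))

theorem ValGt.of_mul_right [NoZeroDivisors R] (hw : IsExtValuation w) (hy : y ≠ 0)
    (h : ValGt w (γ + w y) (x * y)) : ValGt w γ x := by
  by_cases hx0 : x = 0
  · exact Or.inl hx0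
  have h := h.resolve_left (mul_ne_zero hx0 hy)
  rw [hw.mul x y hx0 hy] at h
  exact Or.inr (extLt_of_extLt_add_right h)

/-- If `Q_i` approximates the fraction `a_i / b_i` to first order (`i = 1, 2, 3`) and
`a₃ / b₃ = (a₁ / b₁) (a₂ / b₂)`, then `Q₃` approximates `Q₁ Q₂` to first order. -/
theorem valGt_mul_sub_of_approx [NoZeroDivisors R] (hw : IsExtValuation w) {s t : ℤ × Γ}
    {Q₁ Q₂ Q₃ a₁ a₂ a₃ b₁ b₂ b₃ : R} (hQ₁ : Q₁ ≠ 0) (hQ₂ : Q₂ ≠ 0)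
    (hb₁ : b₁ ≠ 0) (hb₂ : b₂ ≠ 0) (hb₃ : b₃ ≠ 0) (hv₁ : w Q₁ = s) (hv₂ : w Q₂ = t)
    (h₁ : ValGt w (s + w b₁) (a₁ - Q₁ * b₁)) (h₂ : ValGt w (t + w b₂) (a₂ - Q₂ * b₂))
    (h₃ : ValGt w (s + t + w b₃) (a₃ - Q₃ * b₃)) (h : a₁ * a₂ * b₃ = a₃ * (b₁ * b₂)) :
    ValGt w (s + t) (Q₁ * Q₂ - Q₃) := by
  refine ValGt.of_mul_right hw (mul_ne_zero (mul_ne_zero hb₁ hb₂) hb₃) ?_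
  have key : (Q₁ * Q₂ - Q₃) * (b₁ * b₂ * b₃) =
      b₁ * b₂ * (a₃ - Q₃ * b₃) - Q₁ * b₁ * b₃ * (a₂ - Q₂ * b₂)
        - Q₂ * b₂ * b₃ * (a₁ - Q₁ * b₁) - b₃ * ((a₁ - Q₁ * b₁) * (a₂ - Q₂ * b₂)) := by
    linear_combination h
  have hw₂ := hw.mul
  rw [key, hw₂ _ _ (mul_ne_zero hb₁ hb₂) hb₃, hw₂ _ _ hb₁ hb₂]
  have P₃ : ValGt w (s + t + (w b₁ + w b₂ + w b₃)) (b₁ * b₂ * (a₃ - Q₃ * b₃)) := by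
    rw [show s + t + (w b₁ + w b₂ + w b₃) = w (b₁ * b₂) + (s + t + w b₃) by
      rw [hw₂ _ _ hb₁ hb₂]; abel]
    exact h₃.mul_left hw (mul_ne_zero hb₁ hb₂)
  have P₂ : ValGt w (s + t + (w b₁ + w b₂ + w b₃)) (Q₁ * b₁ * b₃ * (a₂ - Q₂ * b₂)) := by
    rw [show s + t + (w b₁ + w b₂ + w b₃) = w (Q₁ * b₁ * b₃) + (t + w b₂) by
      rw [hw₂ _ _ (mul_ne_zero hQ₁ hb₁) hb₃, hw₂ _ _ hQ₁ hb₁, hv₁]; abel]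
    exact h₂.mul_left hw (mul_ne_zero (mul_ne_zero hQ₁ hb₁) hb₃)
  have P₁ : ValGt w (s + t + (w b₁ + w b₂ + w b₃)) (Q₂ * b₂ * b₃ * (a₁ - Q₁ * b₁)) := by
    rw [show s + t + (w b₁ + w b₂ + w b₃) = w (Q₂ * b₂ * b₃) + (s + w b₁) by
      rw [hw₂ _ _ (mul_ne_zero hQ₂ hb₂) hb₃, hw₂ _ _ hQ₂ hb₂, hv₂]; abel]
    exact h₁.mul_left hw (mul_ne_zero (mul_ne_zero hQ₂ hb₂) hb₃)
  have P₄ : ValGt w (s + t + (w b₁ + w b₂ + w b₃))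
      (b₃ * ((a₁ - Q₁ * b₁) * (a₂ - Q₂ * b₂))) := by
    rw [show s + t + (w b₁ + w b₂ + w b₃) = w b₃ + (s + w b₁ + (t + w b₂)) by abel]
    exact (h₁.mul hw h₂).mul_left hw hb₃
  exact ((P₃.sub hw P₂).sub hw P₁).sub hw P₄

end Ordered

variable [IsDomain R]

/-- The graph of `a / b ↦ w a - w b` on the group of fractions of `A ∖ 0`. -/
def valuationGraph (A : Subalgebra ℂ R) (hw : IsExtValuation w) :
    AddSubgroup (Additive (FractionRing R)ˣ × (ℤ × Γ)) where
  carrier := {z | ∃ a ∈ A, ∃ b ∈ A, a ≠ 0 ∧ b ≠ 0 ∧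
    (z.1.toMul : FractionRing R) * algebraMap R _ b = algebraMap R _ a ∧ z.2 + w b = w a}
  zero_mem' := ⟨1, A.one_mem, 1, A.one_mem, one_ne_zero, one_ne_zero, by simp⟩
  add_mem' := by
    rintro z z' ⟨a, ha, b, hb, ha0, hb0, hab, hzw⟩ ⟨a', ha', b', hb', ha0', hb0', hab', hzw'⟩
    refine ⟨a * a', mul_mem ha ha', b * b', mul_mem hb hb', mul_ne_zero ha0 ha0',
      mul_ne_zero hb0 hb0', ?_, ?_⟩
    · rw [Prod.fst_add, toMul_add, Units.val_mul, map_mul, map_mul, ← hab, ← hab']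
      ring
    · rw [Prod.snd_add, hw.mul _ _ hb0 hb0', hw.mul _ _ ha0 ha0', ← hzw, ← hzw']
      abel
  neg_mem' := by
    rintro z ⟨a, ha, b, hb, ha0, hb0, hab, hzw⟩
    refine ⟨b, hb, a, ha, hb0, ha0, ?_, ?_⟩
    · rw [Prod.fst_neg, toMul_neg, ← hab, Units.val_inv_eq_inv_val,
        inv_mul_cancel_left₀ (Units.ne_zero _)]
    · rw [Prod.snd_neg, ← hzw]
      abel

theorem exists_addMonoidHom_mem_valuationGraph (A : Subalgebra ℂ R) (hw : IsExtValuation w)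
    {S : AddSubmonoid (ℤ × Γ)} (hS : (S : Set (ℤ × Γ)) = {γ | ∃ p : R, p ∈ A ∧ p ≠ 0 ∧ w p = γ})
    [Module.Projective ℤ (Submodule.span ℤ (S : Set (ℤ × Γ)))] :
    ∃ φ : Submodule.span ℤ (S : Set (ℤ × Γ)) →+ Additive (FractionRing R)ˣ,
      ∀ x, (φ x, (x : ℤ × Γ)) ∈ valuationGraph A hw := by
  set N := Submodule.span ℤ (S : Set (ℤ × Γ))
  set V := valuationGraph A hw
  have hwS : ∀ p ∈ A, p ≠ 0 → w p ∈ N := fun p hp hp0 ↦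
    Submodule.subset_span (hS ▸ ⟨p, hp, hp0, rfl⟩ : w p ∈ (S : Set (ℤ × Γ)))
  have hVN : ∀ z ∈ V, z.2 ∈ N := by
    rintro z ⟨a, ha, b, hb, ha0, hb0, -, hz⟩
    rw [eq_sub_of_add_eq hz]
    exact N.sub_mem (hwS a ha ha0) (hwS b hb hb0)
  let snd : V →ₗ[ℤ] ℤ × Γ := ((AddMonoidHom.snd _ _).comp V.subtype).toIntLinearMap
  have hN : N ≤ LinearMap.range snd := by
    rw [Submodule.span_le]
    rintro _ hs
    obtain ⟨p, hp, hp0, rfl⟩ := hS ▸ hs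
    have hp' : algebraMap R (FractionRing R) p ≠ 0 :=
      (map_ne_zero_iff _ (IsFractionRing.injective R _)).2 hp0
    exact ⟨⟨(Additive.ofMul (Units.mk0 _ hp'), w p),
      p * p, mul_mem hp hp, p, hp, mul_ne_zero hp0 hp0, hp0, (map_mul _ _ _).symm,
      (hw.mul p p hp0 hp0).symm⟩, rfl⟩
  let π : V →ₗ[ℤ] N := snd.codRestrict N fun z ↦ hVN z z.2
  have hπ : Function.Surjective π := by
    rintro ⟨x, hx⟩
    obtain ⟨z, hz⟩ := hN hx
    exact ⟨z, Subtype.ext hz⟩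
  obtain ⟨σ, hσ⟩ := Module.projective_lifting_property π LinearMap.id hπ
  refine ⟨(AddMonoidHom.fst _ _).comp (V.subtype.comp σ.toAddMonoidHom), fun x ↦ ?_⟩
  have hx : (V.subtype (σ x)).2 = x := congrArg Subtype.val (LinearMap.congr_fun hσ x)
  convert (σ x).2 using 1
  exact Prod.ext rfl hx.symm

theorem exists_representatives_mul_sub_valGt [IsOrderedAddMonoid Γ] (A : Subalgebra ℂ R)
    (hw : IsExtValuation w) (hl : HasOneDimLeaves w) {S : AddSubmonoid (ℤ × Γ)}
    (hS : (S : Set (ℤ × Γ)) = {γ | ∃ p : R, p ∈ A ∧ p ≠ 0 ∧ w p = γ})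
    [Module.Projective ℤ (Submodule.span ℤ (S : Set (ℤ × Γ)))] :
    ∃ Q : S → R, (∀ s, Q s ∈ A) ∧ (∀ s, Q s ≠ 0) ∧ (∀ s, w (Q s) = s) ∧
      ∀ s t, ValGt w ((s + t : S) : ℤ × Γ) (Q s * Q t - Q (s + t)) := by
  obtain ⟨φ, hφ⟩ := exists_addMonoidHom_mem_valuationGraph A hw hS
  let ι (s : S) : Submodule.span ℤ (S : Set (ℤ × Γ)) := ⟨s, Submodule.subset_span s.2⟩
  choose a ha b hb ha0 hb0 hab hwab using fun s ↦ hφ (ι s)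
  choose p hp hp0 hwp using fun s : S ↦
    (hS ▸ s.2 : (s : ℤ × Γ) ∈ {γ | ∃ p : R, p ∈ A ∧ p ≠ 0 ∧ w p = γ})
  have happrox : ∀ s, ∃ c : ℂ, c ≠ 0 ∧ ValGt w (s + w (b s)) (a s - (c • p s) * b s) := by
    intro s
    obtain ⟨c, hc0, hc⟩ := hl (p s * b s) (a s) (mul_ne_zero (hp0 s) (hb0 s)) (ha0 s)
      (by rw [hw.mul _ _ (hp0 s) (hb0 s), hwp, ← hwab])
    exact ⟨c, hc0, by rwa [smul_mul_assoc, hwab]⟩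
  choose c hc0 hc using happrox
  have hcross : ∀ s t, a s * a t * b (s + t) = a (s + t) * (b s * b t) := by
    intro s t
    apply IsFractionRing.injective R (FractionRing R)
    have hφ_add : φ (ι (s + t)) = φ (ι s) + φ (ι t) := by rw [← map_add]; rfl
    simp only [map_mul, ← hab, hφ_add, toMul_add, Units.val_mul]
    ring
  have hQ0 s : c s • p s ≠ 0 := smul_ne_zero (hc0 s) (hp0 s)
  have hwQ s : w (c s • p s) = s := (hw.smul _ _ (hc0 s) (hp0 s)).trans (hwp s)
  refine ⟨fun s ↦ c s • p s, fun s ↦ A.smul_mem (hp s) _, hQ0, hwQ, fun s t ↦ ?_⟩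
  exact valGt_mul_sub_of_approx hw (hQ0 s) (hQ0 t) (hb0 s) (hb0 t) (hb0 (s + t)) (hwQ s) (hwQ t)
    (hc s) (hc t) (hc (s + t)) (hcross s t)

end Valuation

open Polynomial in
theorem hasOneDimLeaves_of_leadingCoeff {v : F → Γ}
    (hv_leaves : ∀ f g : F, f ≠ 0 → g ≠ 0 → v f = v g →
      ∃ c : ℂ, c ≠ 0 ∧ (g - c • f = 0 ∨ v g < v (g - c • f)))
    {w : F[X] → ℤ × Γ} (hw : ∀ p : F[X], p ≠ 0 → w p = ((p.natDegree : ℤ), v p.leadingCoeff)) :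
    HasOneDimLeaves w := by
  intro p q hp hq hpq
  rw [hw p hp, hw q hq, Prod.mk.injEq, Nat.cast_inj] at hpq
  obtain ⟨c, hc0, hc⟩ :=
    hv_leaves _ _ (leadingCoeff_ne_zero.2 hp) (leadingCoeff_ne_zero.2 hq) hpq.2
  have hreg : IsSMulRegular F c := IsSMulRegular.of_ne_zero hc0
  have hdeg : q.degree = (c • p).degree := by
    rw [degree_smul_of_smul_regular _ hreg, degree_eq_natDegree hp, degree_eq_natDegree hq, hpq.1]
  have hlc : (c • p).leadingCoeff = c • p.leadingCoeff := leadingCoeff_smul_of_smul_regular _ hreg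
  refine ⟨c, hc0, ?_⟩
  by_cases hr : q - c • p = 0
  · exact Or.inl hr
  refine Or.inr ?_
  rw [hw q hq, hw _ hr]
  by_cases hlc0 : q.leadingCoeff - c • p.leadingCoeff = 0
  · refine Or.inl (Nat.cast_lt.2 (natDegree_lt_natDegree hr (degree_sub_lt_left hdeg hq ?_)))
    rw [hlc, sub_eq_zero.1 hlc0]
  · have hne : q.leadingCoeff ≠ (c • p).leadingCoeff := by rwa [hlc, ← sub_ne_zero]
    have hdeg' : (q - c • p).degree = q.degree := by
      rw [sub_eq_add_neg, degree_add_eq_of_leadingCoeff_add_ne_zero, degree_neg, ← hdeg, max_self]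
      rwa [leadingCoeff_neg, ← sub_eq_add_neg, sub_ne_zero]
    refine Or.inr ⟨congrArg Nat.cast (natDegree_eq_of_degree_eq hdeg').symm, ?_⟩
    rw [leadingCoeff_sub_of_degree_eq hdeg hne, hlc]
    exact hc.resolve_left hlc0

section Leaves

variable {A vt hvt_min hvt_smul}

theorem mem_filtAt_of_eq {γ : ℤ × Γ} {Q : A} (hQ : vt Q = γ) :
    Q ∈ filtAt A vt hvt_min hvt_smul γ :=
  Or.inr (hQ ▸ extLe_refl γ)

theorem bijective_toSpanSingleton_grQuot (hl : HasOneDimLeaves vt) {γ : ℤ × Γ} {Q : A}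
    (hQ0 : (Q : Polynomial F) ≠ 0) (hQ : vt Q = γ) :
    Function.Bijective (LinearMap.toSpanSingleton ℂ (grQuot A vt hvt_min hvt_smul γ)
      (Submodule.Quotient.mk ⟨Q, mem_filtAt_of_eq hQ⟩)) := by
  have hmk : ∀ x : filtAt A vt hvt_min hvt_smul γ,
      (Submodule.Quotient.mk x : grQuot A vt hvt_min hvt_smul γ) = 0 ↔
        ValGt vt γ (x : Polynomial F) :=
    fun x ↦ Submodule.Quotient.mk_eq_zero _
  refine ⟨?_, fun y ↦ ?_⟩
  · rw [← LinearMap.ker_eq_bot]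
    refine LinearMap.ker_toSpanSingleton ℂ fun h ↦ extLt_irrefl γ ?_
    exact hQ ▸ ((hmk _).1 h).resolve_left hQ0
  obtain ⟨x, rfl⟩ := Submodule.Quotient.mk_surjective _ y
  by_cases hx : ValGt vt γ (x : Polynomial F)
  · exact ⟨0, by rw [map_zero, eq_comm, hmk]; exact hx⟩
  have hx0 : ((x : A) : Polynomial F) ≠ 0 := fun h ↦ hx (Or.inl h)
  have hxγ : vt (x : A) = γ := by
    by_contra hne
    exact hx (Or.inr (extLt_of_extLe_of_ne (x.2.resolve_left hx0) (Ne.symm hne)))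
  obtain ⟨c, -, hc⟩ := hl Q x hQ0 hx0 (hQ.trans hxγ.symm)
  refine ⟨c, ?_⟩
  rw [LinearMap.toSpanSingleton_apply, ← Submodule.Quotient.mk_smul, eq_comm,
    Submodule.Quotient.eq]
  rwa [hxγ] at hc

end Leaves

theorem associated_graded_iso_semigroup_algebra_general
    {d : ℕ}
    (v : F → Lex (Fin d → ℤ))
    (hv_leaves : ∀ f g : F, f ≠ 0 → g ≠ 0 → v f = v g →
      ∃ c : ℂ, c ≠ 0 ∧ (g - c • f = 0 ∨ v g < v (g - c • f)))
    (A : Subalgebra ℂ (Polynomial F))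
    -- the extended valuation `ṽ` ...
    (vt : Polynomial F → ℤ × Lex (Fin d → ℤ))
    (hvt : ∀ p : Polynomial F, p ≠ 0 → vt p = ((p.natDegree : ℤ), v p.leadingCoeff))
    -- ... which is a valuation for the order `extLe` on `ℤ × ℤ^d`:
    (hvt_min : ∀ p q : Polynomial F, p ≠ 0 → q ≠ 0 → p + q ≠ 0 →
      extLe (vt p) (vt (p + q)) ∨ extLe (vt q) (vt (p + q)))
    (hvt_smul : ∀ (c : ℂ) (p : Polynomial F), c ≠ 0 → p ≠ 0 → vt (c • p) = vt p)
    (hvt_mul : ∀ p q : Polynomial F, p ≠ 0 → q ≠ 0 → vt (p * q) = vt p + vt q)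
    -- the value semigroup `S = S(A, ṽ)`, assumed finitely generated
    (S : AddSubmonoid (ℤ × Lex (Fin d → ℤ)))
    (hS : (S : Set (ℤ × Lex (Fin d → ℤ))) =
      {γ | ∃ p : Polynomial F, p ∈ A ∧ p ≠ 0 ∧ vt p = γ})
    (hS_fg : S.FG)
    -- `G` is a realization of the associated graded algebra `gr A = ⊕_{γ ∈ S} F_γ/F_{>γ}`:
    (G : Type) [CommRing G] [Algebra ℂ G]
    (e : G ≃ₗ[ℂ] DirectSum ↥S (fun s : ↥S => grQuot A vt hvt_min hvt_smul ↑s))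
    -- whose multiplication is induced by the multiplication of `A`
    (he_mul : ∀ (s t : ↥S) (f g : ↥A)
      (hf : f ∈ filtAt A vt hvt_min hvt_smul ↑s) (hg : g ∈ filtAt A vt hvt_min hvt_smul ↑t)
      (hfg : f * g ∈ filtAt A vt hvt_min hvt_smul ↑(s + t)),
      e.symm (DirectSum.of (fun s : ↥S => grQuot A vt hvt_min hvt_smul ↑s) s
          (Submodule.Quotient.mk ⟨f, hf⟩)) *
        e.symm (DirectSum.of (fun s : ↥S => grQuot A vt hvt_min hvt_smul ↑s) t
          (Submodule.Quotient.mk ⟨g, hg⟩)) =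
      e.symm (DirectSum.of (fun s : ↥S => grQuot A vt hvt_min hvt_smul ↑s) (s + t)
        (Submodule.Quotient.mk ⟨f * g, hfg⟩))) :
    Nonempty (G ≃ₐ[ℂ] AddMonoidAlgebra ℂ ↥S) := by
  classical
  have hw : IsExtValuation vt := ⟨hvt_min, hvt_smul, hvt_mul⟩
  have hl : HasOneDimLeaves vt := hasOneDimLeaves_of_leadingCoeff hv_leaves hvt
  -- the group generated by `S` is then free, being finitely generated and torsion free
  have : Module.Finite ℤ (Submodule.span ℤ (S : Set (ℤ × Lex (Fin d → ℤ)))) :=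
    Module.Finite.iff_fg.2 hS_fg.span_int_fg
  obtain ⟨Q, hQA, hQ0, hwQ, hQmul⟩ := exists_representatives_mul_sub_valGt A hw hl hS
  let q (s : S) : A := ⟨Q s, hQA s⟩
  have hwq (s t : S) : vt ((q s * q t : A) : Polynomial F) = ↑(s + t) := by
    change vt (Q s * Q t) = _
    rw [hvt_mul _ _ (hQ0 s) (hQ0 t), hwQ, hwQ]
    rfl
  let m (s : S) : grQuot A vt hvt_min hvt_smul s :=
    Submodule.Quotient.mk ⟨q s, mem_filtAt_of_eq (hwQ s)⟩
  let b := (DirectSum.basisOfBijective m fun s ↦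
    bijective_toSpanSingleton_grQuot (Q := q s) hl (hQ0 s) (hwQ s)).map e.symm
  refine ⟨(b.addMonoidAlgebraAlgEquiv fun s t ↦ ?_).symm⟩
  simp only [b, Module.Basis.map_apply, DirectSum.basisOfBijective_apply, m]
  rw [he_mul s t (q s) (q t) _ _ (mem_filtAt_of_eq (hwq s t))]
  congr 2
  exact ((Submodule.Quotient.eq _).2 (hQmul s t)).symm

/-- Let `F ⊇ ℂ` be a field with a faithful `ℤ^d`-valued valuation `v` with
one-dimensional leaves (`ℤ^d` ordered lexicographically), `A = ⊕_k A_k` a graded `ℂ`-subalgebra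
of `F[t]`, `ṽ = vt` the extended valuation with values in `ℤ × ℤ^d` (ordered by
`(k,x) > (ℓ,y)` iff `k < ℓ`, or `k = ℓ` and `x > y`), and `S = S(A, ṽ)` the value semigroup,
assumed finitely generated. Then the associated graded algebra `gr A = ⊕_{γ ∈ S} F_γ / F_{>γ}`
(i.e. any commutative `ℂ`-algebra `G` whose underlying module is `⊕_{γ ∈ S} F_γ / F_{>γ}` and
whose multiplication is induced by that of `A`) is isomorphic as a `ℂ`-algebra to the monoid
algebra `ℂ[S]`. -/
theorem associated_graded_iso_semigroup_algebra
    {d : ℕ}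
    (v : F → Lex (Fin d → ℤ))
    (hv_add : ∀ f g : F, f ≠ 0 → g ≠ 0 → f + g ≠ 0 → min (v f) (v g) ≤ v (f + g))
    (hv_smul : ∀ (c : ℂ) (f : F), c ≠ 0 → f ≠ 0 → v (c • f) = v f)
    (hv_mul : ∀ f g : F, f ≠ 0 → g ≠ 0 → v (f * g) = v f + v g)
    (hv_leaves : ∀ f g : F, f ≠ 0 → g ≠ 0 → v f = v g →
      ∃ c : ℂ, c ≠ 0 ∧ (g - c • f = 0 ∨ v g < v (g - c • f)))
    -- `v` takes the standard basis vectors of `ℤ^d` as values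
    (u : Fin d → F) (hu : ∀ i, u i ≠ 0 ∧ v (u i) = toLex (Pi.single i 1))
    (A : Subalgebra ℂ (Polynomial F))
    -- `A` is graded: it contains the homogeneous components of all its elements
    (hA_graded : ∀ p ∈ A, ∀ k : ℕ, Polynomial.C (p.coeff k) * Polynomial.X ^ k ∈ A)
    -- the extended valuation `ṽ` ...
    (vt : Polynomial F → ℤ × Lex (Fin d → ℤ))
    (hvt : ∀ p : Polynomial F, p ≠ 0 → vt p = ((p.natDegree : ℤ), v p.leadingCoeff))
    -- ... which is a valuation for the order `extLe` on `ℤ × ℤ^d`: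
    (hvt_min : ∀ p q : Polynomial F, p ≠ 0 → q ≠ 0 → p + q ≠ 0 →
      extLe (vt p) (vt (p + q)) ∨ extLe (vt q) (vt (p + q)))
    (hvt_smul : ∀ (c : ℂ) (p : Polynomial F), c ≠ 0 → p ≠ 0 → vt (c • p) = vt p)
    (hvt_mul : ∀ p q : Polynomial F, p ≠ 0 → q ≠ 0 → vt (p * q) = vt p + vt q)
    -- the value semigroup `S = S(A, ṽ)`, assumed finitely generated
    (S : AddSubmonoid (ℤ × Lex (Fin d → ℤ)))
    (hS : (S : Set (ℤ × Lex (Fin d → ℤ))) =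
      {γ | ∃ p : Polynomial F, p ∈ A ∧ p ≠ 0 ∧ vt p = γ})
    (hS_fg : S.FG)
    -- `G` is a realization of the associated graded algebra `gr A = ⊕_{γ ∈ S} F_γ/F_{>γ}`:
    (G : Type) [CommRing G] [Algebra ℂ G]
    (e : G ≃ₗ[ℂ] DirectSum ↥S (fun s : ↥S => grQuot A vt hvt_min hvt_smul ↑s))
    -- whose multiplication is induced by the multiplication of `A`
    (he_mul : ∀ (s t : ↥S) (f g : ↥A)
      (hf : f ∈ filtAt A vt hvt_min hvt_smul ↑s) (hg : g ∈ filtAt A vt hvt_min hvt_smul ↑t)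
      (hfg : f * g ∈ filtAt A vt hvt_min hvt_smul ↑(s + t)),
      e.symm (DirectSum.of (fun s : ↥S => grQuot A vt hvt_min hvt_smul ↑s) s
          (Submodule.Quotient.mk ⟨f, hf⟩)) *
        e.symm (DirectSum.of (fun s : ↥S => grQuot A vt hvt_min hvt_smul ↑s) t
          (Submodule.Quotient.mk ⟨g, hg⟩)) =
      e.symm (DirectSum.of (fun s : ↥S => grQuot A vt hvt_min hvt_smul ↑s) (s + t)
        (Submodule.Quotient.mk ⟨f * g, hfg⟩))) :
    Nonempty (G ≃ₐ[ℂ] AddMonoidAlgebra ℂ ↥S) :=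
  associated_graded_iso_semigroup_algebra_general v hv_leaves A vt hvt hvt_min hvt_smul hvt_mul S hS
    hS_fg G e he_mul
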